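/- arXiv:1602.05548 — 2 statements merged into one kernel-verified Lean document; each statement's English description precedes it below -/
import Mathlib

section
/- Let (Ω, μ) be a probability space, K and N finite index sets, and for each t ∈ ℕ let Q_k(t) (k ∈ K) and H_n(t) (n ∈ N) be nonnegative random variables whose squares are integrable, and let η(t) be an integrable random variable. Define L(t) = (1/2)(∑_{k∈K} Q_k(t)² + ∑_{n∈N} H_n(t)²). Let V > 0, B ≥ 0, C ≥ 0, ε > 0 and η_opt, η_max be real constants with E[η(t)] ≤ η_max for all t. Suppose the drift-plus-penalty inequality E[L(t+1)] − E[L(t)] − V·E[η(t)] ≤ B + C − V·η_opt − ε·∑_{k∈K} E[Q_k(t)] holds for every t ∈ ℕ. Then every actual queue and every virtual queue is mean-rate stable: for each k ∈ K, lim_{T→∞} E[Q_k(T)]/T = 0, and for each n ∈ N, lim_{T→∞} E[H_n(T)]/T = 0. (Paper's Theorem 1.) -/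
/-!
Bounding `E[η(t)]` by `η_max` and dropping the nonnegative term `ε ∑ E[Q_k(t)]`, the
drift-plus-penalty inequality says that `E[L]` grows by at most a constant per slot, hence
`E[L(T)] = O(T)`. Every `Q_k(T)²` and `H_n(T)²` is at most `2 L(T)`, so Jensen's inequality
`E[X]² ≤ E[X²]` gives `E[Q_k(T)], E[H_n(T)] = O(√T) = o(T)`.
-/

open MeasureTheory Filter Finset

theorem le_add_mul_of_forall_succ_le_add {u : ℕ → ℝ} {c : ℝ} (h : ∀ t, u (t + 1) ≤ u t + c)
    (T : ℕ) : u T ≤ u 0 + T * c := by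
  induction T with
  | zero => simp
  | succ T ih =>
    push_cast
    linarith [h T]

theorem tendsto_div_natCast_of_sq_le_linear {g : ℕ → ℝ} {a b : ℝ}
    (hg : ∀ T : ℕ, g T ^ 2 ≤ a + b * T) :
    Tendsto (fun T : ℕ => g T / T) atTop (nhds 0) := by
  have hdecay : Tendsto (fun T : ℕ => a / (T : ℝ) ^ 2 + b / T) atTop (nhds 0) := by
    have hcast := tendsto_natCast_atTop_atTop (R := ℝ)
    simpa using (tendsto_const_nhds.div_atTop ((tendsto_pow_atTop two_ne_zero).comp hcast)).add
      (tendsto_const_nhds.div_atTop hcast)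
  refine squeeze_zero_norm' ?_ (by simpa using hdecay.sqrt)
  filter_upwards [eventually_gt_atTop 0] with T hT
  have hT : (0 : ℝ) < T := by exact_mod_cast hT
  refine Real.abs_le_sqrt ?_
  calc (g T / T) ^ 2 = g T ^ 2 / (T : ℝ) ^ 2 := div_pow _ _ _
    _ ≤ (a + b * T) / (T : ℝ) ^ 2 := by gcongr; exact hg T
    _ = a / (T : ℝ) ^ 2 + b / T := by field_simp

theorem sq_le_sum_sq_add_sum_sq {ι κ : Type*} [Fintype ι] [Fintype κ] (x : ι → ℝ) (y : κ → ℝ)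
    (i : ι) : x i ^ 2 ≤ ∑ j, x j ^ 2 + ∑ l, y l ^ 2 := by
  have hx := single_le_sum (f := fun j => x j ^ 2) (fun j _ => sq_nonneg _) (mem_univ i)
  linarith [sum_nonneg fun l (_ : l ∈ univ) => sq_nonneg (y l)]

section Expectation

variable {Ω : Type*} [MeasurableSpace Ω] {μ : Measure Ω} [IsProbabilityMeasure μ]

/-- If `f` is not integrable its integral is the junk value `0`, so no measurability of `f`
itself is needed. -/
theorem sq_integral_le_integral_sq {f : Ω → ℝ} (hf : Integrable (fun ω => f ω ^ 2) μ) :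
    (∫ ω, f ω ∂μ) ^ 2 ≤ ∫ ω, f ω ^ 2 ∂μ := by
  by_cases hfi : Integrable f μ
  · have hL2 : MemLp f 2 μ := (memLp_two_iff_integrable_sq hfi.aestronglyMeasurable).2 hf
    have hvar := ProbabilityTheory.variance_nonneg f μ
    rw [ProbabilityTheory.variance_eq_sub hL2] at hvar
    simpa using hvar
  · rw [integral_undef hfi, sq, zero_mul]
    exact integral_nonneg fun ω => sq_nonneg _

theorem tendsto_integral_div_natCast_of_integral_sq_le_linear {f : ℕ → Ω → ℝ} {a b : ℝ}
    (hf : ∀ T, Integrable (fun ω => f T ω ^ 2) μ) (hbound : ∀ T : ℕ, ∫ ω, f T ω ^ 2 ∂μ ≤ a + b * T) :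
    Tendsto (fun T : ℕ => (∫ ω, f T ω ∂μ) / T) atTop (nhds 0) :=
  tendsto_div_natCast_of_sq_le_linear fun T => (sq_integral_le_integral_sq (hf T)).trans (hbound T)

end Expectation

theorem drift_plus_penalty_implies_mean_rate_stable_general
    {Ω : Type*} [MeasurableSpace Ω] (μ : Measure Ω) [IsProbabilityMeasure μ]
    {K N : Type*} [Fintype K] [Fintype N]
    (Q : ℕ → K → Ω → ℝ) (H : ℕ → N → Ω → ℝ) (η : ℕ → Ω → ℝ)
    (hQnonneg : ∀ t k ω, 0 ≤ Q t k ω)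
    (hQsq : ∀ t k, Integrable (fun ω => (Q t k ω) ^ 2) μ)
    (hHsq : ∀ t n, Integrable (fun ω => (H t n ω) ^ 2) μ)
    (L : ℕ → Ω → ℝ)
    (hL : ∀ t ω, L t ω = (1 / 2) * (∑ k, (Q t k ω) ^ 2 + ∑ n, (H t n ω) ^ 2))
    (V B C ε ηopt ηmax : ℝ) (hV : 0 < V) (hε : 0 < ε)
    (hηmax : ∀ t, (∫ ω, η t ω ∂μ) ≤ ηmax)
    (hdrift : ∀ t, (∫ ω, L (t + 1) ω ∂μ) - (∫ ω, L t ω ∂μ) - V * (∫ ω, η t ω ∂μ)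
        ≤ B + C - V * ηopt - ε * ∑ k, ∫ ω, Q t k ω ∂μ) :
    (∀ k, Tendsto (fun T : ℕ => (∫ ω, Q T k ω ∂μ) / (T : ℝ)) atTop (nhds 0)) ∧
    (∀ n, Tendsto (fun T : ℕ => (∫ ω, H T n ω ∂μ) / (T : ℝ)) atTop (nhds 0)) := by
  set c := B + C - V * ηopt + V * ηmax
  have hstep : ∀ t, ∫ ω, L (t + 1) ω ∂μ ≤ ∫ ω, L t ω ∂μ + c := fun t => by
    have hQmean : 0 ≤ ∑ k, ∫ ω, Q t k ω ∂μ :=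
      sum_nonneg fun k _ => integral_nonneg (hQnonneg t k)
    linarith [hdrift t, mul_le_mul_of_nonneg_left (hηmax t) hV.le, mul_nonneg hε.le hQmean]
  have hLint : ∀ t, Integrable (L t) μ := fun t => by
    simp_rw [funext (hL t)]
    exact ((integrable_finsetSum _ fun k _ => hQsq t k).add
      (integrable_finsetSum _ fun n _ => hHsq t n)).const_mul _
  have hbound : ∀ (T : ℕ) (X : Ω → ℝ), (∀ ω, X ω ^ 2 ≤ 2 * L T ω) →
      ∫ ω, X ω ^ 2 ∂μ ≤ 2 * ∫ ω, L 0 ω ∂μ + 2 * c * T := fun T X hX => by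
    calc ∫ ω, X ω ^ 2 ∂μ ≤ ∫ ω, 2 * L T ω ∂μ :=
          integral_mono_of_nonneg (ae_of_all _ fun ω => sq_nonneg (X ω))
            ((hLint T).const_mul 2) (ae_of_all _ hX)
      _ = 2 * ∫ ω, L T ω ∂μ := integral_const_mul _ _
      _ ≤ 2 * ∫ ω, L 0 ω ∂μ + 2 * c * T := by
          linarith [le_add_mul_of_forall_succ_le_add (u := fun t => ∫ ω, L t ω ∂μ) hstep T]
  refine ⟨fun k => ?_, fun n => ?_⟩
  · refine tendsto_integral_div_natCast_of_integral_sq_le_linear (hQsq · k)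
      fun T => hbound T _ fun ω => ?_
    linarith [hL T ω, sq_le_sum_sq_add_sum_sq (Q T · ω) (H T · ω) k]
  · refine tendsto_integral_div_natCast_of_integral_sq_le_linear (hHsq · n)
      fun T => hbound T _ fun ω => ?_
    linarith [hL T ω, sq_le_sum_sq_add_sum_sq (H T · ω) (Q T · ω) n]

/-- Paper's Theorem 1: under the drift-plus-penalty inequality with `ε > 0`,
all actual queues and all virtual queues are mean-rate stable. -/
theorem drift_plus_penalty_implies_mean_rate_stable
    {Ω : Type*} [MeasurableSpace Ω] (μ : Measure Ω) [IsProbabilityMeasure μ]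
    {K N : Type*} [Fintype K] [Fintype N]
    (Q : ℕ → K → Ω → ℝ) (H : ℕ → N → Ω → ℝ) (η : ℕ → Ω → ℝ)
    (hQnonneg : ∀ t k ω, 0 ≤ Q t k ω) (hHnonneg : ∀ t n ω, 0 ≤ H t n ω)
    (hQsq : ∀ t k, Integrable (fun ω => (Q t k ω) ^ 2) μ)
    (hHsq : ∀ t n, Integrable (fun ω => (H t n ω) ^ 2) μ)
    (hηint : ∀ t, Integrable (η t) μ)
    (L : ℕ → Ω → ℝ)
    (hL : ∀ t ω, L t ω = (1 / 2) * (∑ k, (Q t k ω) ^ 2 + ∑ n, (H t n ω) ^ 2))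
    (V B C ε ηopt ηmax : ℝ) (hV : 0 < V) (hB : 0 ≤ B) (hC : 0 ≤ C) (hε : 0 < ε)
    (hηmax : ∀ t, (∫ ω, η t ω ∂μ) ≤ ηmax)
    (hdrift : ∀ t, (∫ ω, L (t + 1) ω ∂μ) - (∫ ω, L t ω ∂μ) - V * (∫ ω, η t ω ∂μ)
        ≤ B + C - V * ηopt - ε * ∑ k, ∫ ω, Q t k ω ∂μ) :
    (∀ k, Tendsto (fun T : ℕ => (∫ ω, Q T k ω ∂μ) / (T : ℝ)) atTop (nhds 0)) ∧
    (∀ n, Tendsto (fun T : ℕ => (∫ ω, H T n ω ∂μ) / (T : ℝ)) atTop (nhds 0)) :=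
  drift_plus_penalty_implies_mean_rate_stable_general μ Q H η hQnonneg hQsq hHsq L hL V B C ε ηopt
    ηmax hV hε hηmax hdrift
end

section
/- Let φ > 0 be a real number, z_1, …, z_K ∈ ℂ, fix k ∈ {1, …, K}, and set S = ∑_{j=1}^{K} |z_j|² + φ, z = z_k, and SINR = |z|² / (∑_{j≠k} |z_j|² + φ). Then the joint infimum over the MSE weight and the receive filter satisfies inf_{w > 0, u ∈ ℂ} [ w·(|u|²·S − 2·Re(u·z) + 1) − log w ] = 1 + log(1 − |z|²/S) = 1 − log(1 + SINR), and this infimum is attained at u* = conj(z)/S and w* = (1 − |z|²/S)^{-1}. (Inner minimization establishing the WSR–WMMSE equivalence of the paper's Proposition 1.) -/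
open Finset

/-!
Completing the square, `‖u‖² S - 2 Re (u z) + 1 = S ‖u - conj z / S‖² + (1 - ‖z‖² / S)`, so
the MSE is minimized by `u* = conj z / S` with minimum `m = 1 - ‖z‖² / S`. For fixed `u` the
weighted term is at least `w m - log w ≥ 1 + log m` by `log x ≤ x - 1` at `x = w m`, with
equality at `w* = m⁻¹`. Finally, splitting `S` into `‖z_k‖²` plus interference-plus-noise shows
`m = (1 + SINR)⁻¹`.
-/

noncomputable def mse (S : ℝ) (z u : ℂ) : ℝ := ‖u‖ ^ 2 * S - 2 * (u * z).re + 1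

theorem mse_eq_mul_norm_sub_sq_add {S : ℝ} (hS : S ≠ 0) (z u : ℂ) :
    mse S z u = S * ‖u - starRingEnd ℂ z / S‖ ^ 2 + (1 - ‖z‖ ^ 2 / S) := by
  simp only [mse, Complex.sq_norm, Complex.normSq_apply, Complex.sub_re, Complex.sub_im,
    Complex.mul_re, Complex.div_ofReal_re, Complex.div_ofReal_im,
    Complex.conj_re, Complex.conj_im]
  field_simp
  ring

theorem mse_conj_div {S : ℝ} (hS : S ≠ 0) (z : ℂ) :
    mse S z (starRingEnd ℂ z / S) = 1 - ‖z‖ ^ 2 / S := by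
  rw [mse_eq_mul_norm_sub_sq_add hS, sub_self, norm_zero]
  ring

theorem isLeast_range_mse {S : ℝ} (hS : 0 < S) (z : ℂ) :
    IsLeast (Set.range (mse S z)) (1 - ‖z‖ ^ 2 / S) := by
  refine ⟨⟨starRingEnd ℂ z / S, mse_conj_div hS.ne' z⟩, ?_⟩
  rintro _ ⟨u, rfl⟩
  rw [mse_eq_mul_norm_sub_sq_add hS.ne']
  linarith [mul_nonneg hS.le (sq_nonneg ‖u - starRingEnd ℂ z / S‖)]

theorem one_add_log_le_mul_sub_log {m w : ℝ} (hm : 0 < m) (hw : 0 < w) :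
    1 + Real.log m ≤ w * m - Real.log w := by
  have h := Real.log_le_sub_one_of_pos (mul_pos hw hm)
  rw [Real.log_mul hw.ne' hm.ne'] at h
  linarith

theorem inv_mul_sub_log_inv {m : ℝ} (hm : m ≠ 0) :
    m⁻¹ * m - Real.log m⁻¹ = 1 + Real.log m := by
  rw [Real.log_inv, inv_mul_cancel₀ hm]
  ring

theorem isLeast_mul_sub_log {α : Type*} {e : α → ℝ} {m : ℝ} (hm : 0 < m)
    (he : IsLeast (Set.range e) m) :
    IsLeast {x | ∃ w : ℝ, ∃ u, 0 < w ∧ x = w * e u - Real.log w} (1 + Real.log m) := by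
  obtain ⟨⟨u₀, hu₀⟩, hle⟩ := he
  refine ⟨⟨m⁻¹, u₀, inv_pos.mpr hm, by rw [hu₀, inv_mul_sub_log_inv hm.ne']⟩, ?_⟩
  rintro _ ⟨w, u, hw, rfl⟩
  have hmu : w * m ≤ w * e u := mul_le_mul_of_nonneg_left (hle ⟨u, rfl⟩) hw.le
  linarith [one_add_log_le_mul_sub_log hm hw]

theorem one_sub_div_add_eq_inv_one_add_div {a b : ℝ} (hb : b ≠ 0) (hab : a + b ≠ 0) :
    1 - a / (a + b) = (1 + a / b)⁻¹ := by
  rw [one_sub_div hab, one_add_div hb, inv_div, add_sub_cancel_left, add_comm]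

/-- Inner minimization establishing the WSR–WMMSE equivalence of the paper's
Proposition 1: the joint infimum over the MSE weight `w > 0` and receive
filter `u ∈ ℂ` of `w e(u) - log w` equals `1 + log (1 - |z_k|²/S)
= 1 - log (1 + SINR)`, attained at `u* = conj z_k / S` and
`w* = (1 - |z_k|²/S)⁻¹`. -/
theorem wmmse_inner_minimization (K : ℕ) (φ : ℝ) (hφ : 0 < φ) (z : Fin K → ℂ) (k : Fin K)
    (S SINR : ℝ)
    (hS : S = ∑ j, ‖z j‖ ^ 2 + φ)
    (hSINR : SINR = ‖z k‖ ^ 2 / (∑ j ∈ Finset.univ.erase k, ‖z j‖ ^ 2 + φ))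
    (e : ℂ → ℝ) (he : ∀ u : ℂ, e u = ‖u‖ ^ 2 * S - 2 * (u * z k).re + 1) :
    IsGLB {x : ℝ | ∃ w : ℝ, ∃ u : ℂ, 0 < w ∧ x = w * e u - Real.log w}
        (1 + Real.log (1 - ‖z k‖ ^ 2 / S)) ∧
    1 + Real.log (1 - ‖z k‖ ^ 2 / S) = 1 - Real.log (1 + SINR) ∧
    (1 - ‖z k‖ ^ 2 / S)⁻¹ * e ((starRingEnd ℂ) (z k) / (S : ℂ))
        - Real.log ((1 - ‖z k‖ ^ 2 / S)⁻¹)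
      = 1 + Real.log (1 - ‖z k‖ ^ 2 / S) := by
  set I := ∑ j ∈ univ.erase k, ‖z j‖ ^ 2 + φ
  have hI : 0 < I := add_pos_of_nonneg_of_pos (sum_nonneg fun j _ => by positivity) hφ
  have hS_split : S = ‖z k‖ ^ 2 + I := by
    rw [hS, ← add_sum_erase _ _ (mem_univ k), add_assoc]
  have hS_pos : 0 < S := by rw [hS_split]; positivity
  have hm_SINR : 1 - ‖z k‖ ^ 2 / S = (1 + SINR)⁻¹ := by
    rw [hS_split, hSINR]
    exact one_sub_div_add_eq_inv_one_add_div hI.ne' (by positivity)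
  have hm : 0 < 1 - ‖z k‖ ^ 2 / S := by rw [hm_SINR, hSINR]; positivity
  obtain rfl : e = mse S (z k) := funext he
  refine ⟨(isLeast_mul_sub_log hm (isLeast_range_mse hS_pos (z k))).isGLB, ?_, ?_⟩
  · rw [hm_SINR, Real.log_inv]
    ring
  · rw [mse_conj_div hS_pos.ne', inv_mul_sub_log_inv hm.ne']
end
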